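/- arXiv:2302.02260 — 2 statements merged into one kernel-verified Lean document; each statement's English description precedes it below -/
import Mathlib

section
/- In a q-matroid M=(E,ρ), a subspace V is open (a sum of circuits) if and only if ρ(W)=ρ(V) for every hyperplane W of V (i.e., every codimension-1 subspace W ≤ V). -/
/-!
If a circuit `C ≤ V` is not contained in the hyperplane `W` of `V`, then `C ⊔ W = V` and `C ⊓ W`
is an independent hyperplane of `C`, so submodularity gives `ρ V ≤ ρ W`; this settles the forward
direction. Conversely, suppose `ρ W = ρ V` and every circuit of `V` lies in `W`. Since `V` is
dependent it contains a circuit `D ≤ W`; a hyperplane `B` of `W` missing `D` then has `ρ B = ρ W`,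
and `B` is a hyperplane of rank `ρ B` in the smaller space `B ⊔ ⟨x⟩` (`x ∈ V \ W`), so induction
on `V` produces a circuit of `B ⊔ ⟨x⟩` outside `B`, hence outside `W`. Applied to a hyperplane
containing the sum of all circuits of `V`, this shows that this sum is `V`.
-/

open Submodule Module

namespace QM

variable (F : Type*) {E : Type*} [Field F] [AddCommGroup E] [Module F E]

/-- The rank axioms (R1)-(R3) of a q-matroid. -/
def IsRkFn (ρ : Submodule F E → ℕ) : Prop :=
  (∀ V : Submodule F E, ρ V ≤ finrank F V) ∧
  (∀ ⦃V W : Submodule F E⦄, V ≤ W → ρ V ≤ ρ W) ∧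
  (∀ V W : Submodule F E, ρ (V ⊔ W) + ρ (V ⊓ W) ≤ ρ V + ρ W)

variable {F}

/-- Independent spaces. -/
def Indep (ρ : Submodule F E → ℕ) (V : Submodule F E) : Prop := ρ V = finrank F V

/-- Circuits: dependent spaces all of whose proper subspaces are independent. -/
def IsCircuit (ρ : Submodule F E → ℕ) (C : Submodule F E) : Prop :=
  ¬ Indep ρ C ∧ ∀ D : Submodule F E, D < C → Indep ρ D

/-- Open spaces: sums of circuits. -/
def IsOpenSp (ρ : Submodule F E → ℕ) (V : Submodule F E) : Prop :=
  ∃ S : Set (Submodule F E), (∀ C ∈ S, IsCircuit ρ C) ∧ V = sSup S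

/-- The cyclic core: the sum of all circuits contained in `V`. -/
def cyc (ρ : Submodule F E → ℕ) (V : Submodule F E) : Submodule F E :=
  sSup {C : Submodule F E | IsCircuit ρ C ∧ C ≤ V}

/-- The closure operator: the sum of all `⟨x⟩` with `ρ(V + ⟨x⟩) = ρ V`. -/
def cl (ρ : Submodule F E → ℕ) (V : Submodule F E) : Submodule F E :=
  sSup {W : Submodule F E | ∃ x : E, ρ (V ⊔ span F {x}) = ρ V ∧ W = span F {x}}

/-- Flats. -/
def IsFlat (ρ : Submodule F E → ℕ) (V : Submodule F E) : Prop :=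
  ∀ x : E, x ∉ V → ρ V < ρ (V ⊔ span F {x})

/-- Cyclic flats. -/
def CyclicFlat (ρ : Submodule F E → ℕ) (V : Submodule F E) : Prop :=
  IsFlat ρ V ∧ IsOpenSp ρ V

end QM

namespace Submodule

variable {F E : Type*} [Field F] [AddCommGroup E] [Module F E]

theorem exists_le_covBy_notMem {Z V : Submodule F E} {x : E} (hZV : Z ≤ V) (hxV : x ∈ V)
    (hxZ : x ∉ Z) : ∃ W, Z ≤ W ∧ W ⋖ V ∧ x ∉ W := by
  obtain ⟨f, hfx, hfZ⟩ := Z.exists_dual_map_eq_bot_of_notMem hxZ inferInstance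
  have hxK : x ∉ LinearMap.ker f := hfx
  have hK : IsCoatom (LinearMap.ker f) :=
    LinearMap.isCoatom_ker_of_surjective (LinearMap.surjective fun h => hfx (by simp [h]))
  have hKV : LinearMap.ker f ⋖ LinearMap.ker f ⊔ V := by
    rw [hK.2 _ (left_lt_sup.2 fun h => hxK (h hxV))]
    exact covBy_top_iff.2 hK
  exact ⟨LinearMap.ker f ⊓ V, le_inf (LinearMap.le_ker_iff_map.2 hfZ) hZV,
    inf_covBy_of_covBy_sup_left hKV, fun h => hxK h.1⟩

theorem covBy_iff_finrank_add_one_eq [FiniteDimensional F E] {W V : Submodule F E} :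
    W ⋖ V ↔ W ≤ V ∧ finrank F W + 1 = finrank F V := by
  constructor
  · intro hWV
    obtain ⟨x, hxV, hxW⟩ := SetLike.exists_of_lt hWV.lt
    have hx0 : x ≠ 0 := fun h => hxW (h ▸ W.zero_mem)
    have hxV' : F ∙ x ≤ V := (span_singleton_le_iff_mem x V).2 hxV
    have hsup : F ∙ x ⊔ W = V :=
      (hWV.eq_or_eq le_sup_right (sup_le hxV' hWV.le)).resolve_left
        fun h => hxW (h ▸ mem_sup_left (mem_span_singleton_self x))
    have hdim := finrank_sup_add_finrank_inf_eq (F ∙ x) W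
    rw [hsup, (disjoint_span_singleton_of_notMem hxW).symm.eq_bot, finrank_bot,
      finrank_span_singleton hx0] at hdim
    exact ⟨hWV.le, by omega⟩
  · rintro ⟨hWV, hdim⟩
    refine ⟨hWV.lt_of_ne (by rintro rfl; omega), fun U hWU hUV => ?_⟩
    have := finrank_lt_finrank_of_lt hWU
    have := finrank_lt_finrank_of_lt hUV
    omega

end Submodule

namespace QM

section

variable {F E : Type*} [Field F] [AddCommGroup E] [Module F E] {ρ : Submodule F E → ℕ}

theorem indep_bot (hρ : IsRkFn F ρ) : Indep ρ (⊥ : Submodule F E) := by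
  have := hρ.1 ⊥
  rw [finrank_bot] at this
  rw [Indep, finrank_bot]
  omega

theorem IsCircuit.ne_bot (hρ : IsRkFn F ρ) {C : Submodule F E} (hC : IsCircuit ρ C) : C ≠ ⊥ :=
  fun h => hC.1 (h ▸ indep_bot hρ)

theorem cyc_le (V : Submodule F E) : cyc ρ V ≤ V :=
  sSup_le fun _ hC => hC.2

theorem IsCircuit.le_cyc {C V : Submodule F E} (hC : IsCircuit ρ C) (hCV : C ≤ V) :
    C ≤ cyc ρ V :=
  le_sSup ⟨hC, hCV⟩

theorem isOpenSp_iff_cyc_eq {V : Submodule F E} : IsOpenSp ρ V ↔ cyc ρ V = V := by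
  constructor
  · rintro ⟨S, hS, rfl⟩
    exact (cyc_le _).antisymm (sSup_le fun C hC => (hS C hC).le_cyc (le_sSup hC))
  · exact fun h => ⟨_, fun C hC => hC.1, h.symm⟩

variable [FiniteDimensional F E]

theorem exists_isCircuit_le {U : Submodule F E} (hU : ¬ Indep ρ U) :
    ∃ C, IsCircuit ρ C ∧ C ≤ U := by
  obtain ⟨C, ⟨hCU, hC⟩, hmin⟩ :=
    wellFounded_lt.has_min {D : Submodule F E | D ≤ U ∧ ¬ Indep ρ D} ⟨U, le_rfl, hU⟩
  exact ⟨C, ⟨hC, fun D hDC => by_contra fun hD => hmin D ⟨hDC.le.trans hCU, hD⟩ hDC⟩, hCU⟩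

theorem IsCircuit.rank_le_of_covBy (hρ : IsRkFn F ρ) {C W V : Submodule F E}
    (hC : IsCircuit ρ C) (hCV : C ≤ V) (hWV : W ⋖ V) (hCW : ¬ C ≤ W) : ρ V ≤ ρ W := by
  have hsup : W ⊔ C = V :=
    (hWV.eq_or_eq le_sup_left (sup_le hWV.le hCV)).resolve_left fun h => hCW (h ▸ le_sup_right)
  have hdim : finrank F ↥(W ⊓ C) + 1 = finrank F C :=
    (covBy_iff_finrank_add_one_eq.1 (inf_covBy_of_covBy_sup_left (hsup ▸ hWV))).2
  have hindep : ρ (W ⊓ C) = finrank F ↥(W ⊓ C) :=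
    hC.2 _ (inf_le_right.lt_of_not_ge fun h => hCW (h.trans inf_le_left))
  have hdep : ρ C ≠ finrank F C := hC.1
  have hsub := hρ.2.2 W C
  rw [hsup] at hsub
  have := hρ.1 C
  omega

theorem exists_isCircuit_le_not_le_of_covBy (hρ : IsRkFn F ρ) {W V : Submodule F E}
    (hWV : W ⋖ V) (hrk : ρ W = ρ V) : ∃ D, IsCircuit ρ D ∧ D ≤ V ∧ ¬ D ≤ W := by
  induction V using WellFoundedLT.induction generalizing W with
  | _ V ih =>
  have hdim := (covBy_iff_finrank_add_one_eq.1 hWV).2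
  have hVdep : ¬ Indep ρ V := fun h => by
    have := hρ.1 W
    rw [Indep] at h
    omega
  obtain ⟨D, hD, hDV⟩ := exists_isCircuit_le hVdep
  by_cases hDW : D ≤ W
  swap
  · exact ⟨D, hD, hDV, hDW⟩
  obtain ⟨d, hdD, hd0⟩ := (Submodule.ne_bot_iff D).1 (hD.ne_bot hρ)
  obtain ⟨B, -, hBW, hdB⟩ := exists_le_covBy_notMem bot_le (hDW hdD) (by simpa using hd0)
  have hρB : ρ B = ρ V := le_antisymm ((hρ.2.1 hBW.le).trans_eq hrk)
    (hrk ▸ hD.rank_le_of_covBy hρ hDW hBW fun h => hdB (h hdD))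
  obtain ⟨x, hxV, hxW⟩ := SetLike.exists_of_lt hWV.lt
  set V' := F ∙ x ⊔ B
  have hBV' : B ⋖ V' := covBy_span_singleton_sup fun h => hxW (hBW.le h)
  have hV'V : V' ≤ V := sup_le ((span_singleton_le_iff_mem x V).2 hxV) (hBW.le.trans hWV.le)
  have hV'W : V' ⊓ W = B :=
    (hBV'.eq_or_eq (le_inf hBV'.le hBW.le) inf_le_left).resolve_right
      fun h => hxW (inf_eq_left.1 h (mem_sup_left (mem_span_singleton_self x)))
  have hV'ltV : V' < V :=
    hV'V.lt_of_ne fun h => hBW.lt.ne (by rw [← hV'W, h, inf_eq_right.2 hWV.le])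
  have hρV' : ρ B = ρ V' := le_antisymm (hρ.2.1 hBV'.le) ((hρ.2.1 hV'V).trans_eq hρB.symm)
  obtain ⟨D', hD', hD'V', hD'B⟩ := ih V' hV'ltV hBV' hρV'
  exact ⟨D', hD', hD'V'.trans hV'V, fun h => hD'B (hV'W ▸ le_inf hD'V' h)⟩

end

variable {F E : Type*} [Field F] [Fintype F] [AddCommGroup E] [Module F E]
  [FiniteDimensional F E]

theorem stmt4 (ρ : Submodule F E → ℕ) (hρ : IsRkFn F ρ) (V : Submodule F E) :
    IsOpenSp ρ V ↔
      ∀ W : Submodule F E, W ≤ V → finrank F W + 1 = finrank F V → ρ W = ρ V := by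
  simp only [← and_imp, ← Submodule.covBy_iff_finrank_add_one_eq, isOpenSp_iff_cyc_eq]
  constructor
  · intro hV W hWV
    obtain ⟨C, ⟨hC, hCV⟩, hCW⟩ : ∃ C ∈ {C | IsCircuit ρ C ∧ C ≤ V}, ¬ C ≤ W := by
      by_contra! h
      exact hWV.lt.not_ge (hV ▸ sSup_le h : V ≤ W)
    exact le_antisymm (hρ.2.1 hWV.le) (hC.rank_le_of_covBy hρ hCV hWV hCW)
  · intro h
    refine (cyc_le V).antisymm (by_contra fun hV => ?_)
    obtain ⟨x, hxV, hx⟩ := SetLike.not_le_iff_exists.1 hV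
    obtain ⟨W, hcycW, hWV, -⟩ := Submodule.exists_le_covBy_notMem (cyc_le V) hxV hx
    obtain ⟨D, hD, hDV, hDW⟩ := exists_isCircuit_le_not_le_of_covBy hρ hWV (h W hWV)
    exact hDW ((hD.le_cyc hDV).trans hcycW)

end QM
end

section
/- For q-matroids M₁=(E₁,ρ₁) and M₂=(E₂,ρ₂) with NSBFs ⟨·,·⟩₁, ⟨·,·⟩₂ on E₁,E₂, and the NSBF on E=E₁⊕E₂ defined by ⟨v₁+v₂, w₁+w₂⟩ = ⟨v₁,w₁⟩₁ + ⟨v₂,w₂⟩₂, the dual of the direct sum equals the direct sum of the duals: (M₁⊕M₂)* = M₁* ⊕ M₂*. -/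
/-!
Write the rank of a direct sum as a minimum over pairs `(W₁, W₂)` of
`ρ₁ W₁ + ρ₂ W₂ + dim V - dim (V ⊓ W₁ × W₂)`. Since `(W₁ × W₂)ᗮ = W₁ᗮ × W₂ᗮ` and
`dim W + dim (Vᗮ ⊓ Wᗮ) = dim Vᗮ + dim (V ⊓ W)` for a nondegenerate form, the substitution
`Wᵢ ↦ Wᵢᗮ` turns the expression for `M₁* ⊕ M₂*` at `V` into the one for `M₁ ⊕ M₂` at `Vᗮ`, up to
the constant `dim V - ρ₁ E₁ - ρ₂ E₂`. As `Wᵢ ↦ Wᵢᗮ` is onto and `ρ(E) = ρ₁ E₁ + ρ₂ E₂`, the two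
minima agree up to that constant, which is the claim.
-/

open Submodule Module

namespace QM

variable {F E : Type*} [Field F] [AddCommGroup E] [Module F E]

/-- The dual rank function `ρ*(V) = dim V + ρ(V^⊥) − ρ(E)` with respect to a bilinear form. -/
noncomputable def dualRk (ρ : Submodule F E → ℕ) (B : LinearMap.BilinForm F E) (V : Submodule F E) : ℕ :=
  finrank F V + ρ (B.orthogonal V) - ρ ⊤

end QM

namespace QM

variable {F E₁ E₂ : Type*} [Field F] [AddCommGroup E₁] [Module F E₁]
  [AddCommGroup E₂] [Module F E₂]

/-- The rank function of the direct sum `M₁ ⊕ M₂` on `E₁ × E₂`: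
`ρ(V) = dim V + min { ρ₁(π₁ X) + ρ₂(π₂ X) − dim X : X ≤ V }`
(written in `ℕ` as `min { ρ₁(π₁ X) + ρ₂(π₂ X) + (dim V − dim X) : X ≤ V }`,
which agrees since `dim X ≤ dim V`). -/
noncomputable def dsRank (ρ₁ : Submodule F E₁ → ℕ) (ρ₂ : Submodule F E₂ → ℕ)
    (V : Submodule F (E₁ × E₂)) : ℕ :=
  sInf {n : ℕ | ∃ X : Submodule F (E₁ × E₂), X ≤ V ∧
    n = ρ₁ (X.map (LinearMap.fst F E₁ E₂)) + ρ₂ (X.map (LinearMap.snd F E₁ E₂)) +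
      (finrank F V - finrank F X)}

end QM

section

variable {F : Type*} [Field F]

theorem Submodule.finrank_prod {M₁ M₂ : Type*} [AddCommGroup M₁] [Module F M₁]
    [FiniteDimensional F M₁] [AddCommGroup M₂] [Module F M₂] [FiniteDimensional F M₂]
    (W₁ : Submodule F M₁) (W₂ : Submodule F M₂) :
    finrank F (W₁.prod W₂) = finrank F W₁ + finrank F W₂ := by
  let e : W₁.prod W₂ ≃ₗ[F] W₁ × W₂ :=
    { toFun x := (⟨x.1.1, x.2.1⟩, ⟨x.1.2, x.2.2⟩)
      map_add' _ _ := rfl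
      map_smul' _ _ := rfl
      invFun p := ⟨(p.1, p.2), p.1.2, p.2.2⟩
      left_inv _ := rfl
      right_inv _ := rfl }
  rw [e.finrank_eq, Module.finrank_prod]

namespace LinearMap.BilinForm

variable {M : Type*} [AddCommGroup M] [Module F M]

theorem orthogonal_sup (B : LinearMap.BilinForm F M) (V W : Submodule F M) :
    B.orthogonal (V ⊔ W) = B.orthogonal V ⊓ B.orthogonal W := by
  ext x
  have mem_iff_le_ker : ∀ N : Submodule F M, x ∈ B.orthogonal N ↔ N ≤ ker (B.flip x) :=
    fun N => ⟨fun h n hn => h n hn, fun h n hn => h hn⟩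
  simp only [Submodule.mem_inf, mem_iff_le_ker, sup_le_iff]

variable [FiniteDimensional F M] {B : LinearMap.BilinForm F M}

theorem finrank_add_finrank_orthogonal_inf (hB : B.Nondegenerate) (V W : Submodule F M) :
    finrank F W + finrank F (B.orthogonal V ⊓ B.orthogonal W : Submodule F M) =
      finrank F (B.orthogonal V) + finrank F (V ⊓ W : Submodule F M) := by
  rw [← orthogonal_sup, finrank_orthogonal hB, finrank_orthogonal hB]
  have := finrank_sup_add_finrank_inf_eq V W
  have := (V ⊔ W).finrank_le
  have := Submodule.finrank_mono (le_sup_left : V ≤ V ⊔ W)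
  omega

theorem exists_orthogonal_eq (hB : B.Nondegenerate) (U : Submodule F M) :
    ∃ W, B.orthogonal W = U := by
  refine ⟨B.flip.orthogonal U, (eq_of_le_of_finrank_le (fun u hu w hw => hw u hu) ?_).symm⟩
  rw [finrank_orthogonal hB, finrank_orthogonal hB.flip]
  have := U.finrank_le
  omega

end LinearMap.BilinForm

namespace QM

section RankFunction

variable {M : Type*} [AddCommGroup M] [Module F M] [FiniteDimensional F M]
  {ρ : Submodule F M → ℕ}

theorem IsRkFn.rank_add_finrank_le (hρ : IsRkFn F ρ) {U W : Submodule F M} (hUW : U ≤ W) :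
    ρ W + finrank F U ≤ ρ U + finrank F W := by
  obtain ⟨C', hC'⟩ := U.exists_isCompl
  set C := C' ⊓ W
  have hsup : U ⊔ C = W := by rw [← sup_inf_assoc_of_le C' hUW, hC'.sup_eq_top, top_inf_eq]
  have hinf : U ⊓ C = ⊥ := eq_bot_iff.2 fun x hx => hC'.disjoint.le_bot ⟨hx.1, hx.2.1⟩
  have hdim := finrank_sup_add_finrank_inf_eq U C
  have hsub := hρ.2.2 U C
  rw [hsup, hinf, finrank_bot] at hdim
  rw [hsup, hinf] at hsub
  have := hρ.1 C
  omega

variable {B : LinearMap.BilinForm F M}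

theorem IsRkFn.dualRk_add_rank_top (hρ : IsRkFn F ρ) (hB : B.Nondegenerate) (V : Submodule F M) :
    dualRk ρ B V + ρ ⊤ = finrank F V + ρ (B.orthogonal V) := by
  have := hρ.rank_add_finrank_le (le_top : B.orthogonal V ≤ ⊤)
  rw [finrank_top, LinearMap.BilinForm.finrank_orthogonal hB] at this
  have := V.finrank_le
  unfold dualRk
  omega

theorem IsRkFn.monotone_dualRk (hρ : IsRkFn F ρ) (hB : B.Nondegenerate) :
    Monotone (dualRk ρ B) := by
  intro V V' hVV'
  have := hρ.rank_add_finrank_le (LinearMap.BilinForm.orthogonal_le (B := B) hVV')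
  rw [LinearMap.BilinForm.finrank_orthogonal hB, LinearMap.BilinForm.finrank_orthogonal hB] at this
  have := hρ.dualRk_add_rank_top hB V
  have := hρ.dualRk_add_rank_top hB V'
  have := Submodule.finrank_mono hVV'
  have := V'.finrank_le
  omega

end RankFunction

section DirectSum

variable {E₁ E₂ : Type*} [AddCommGroup E₁] [Module F E₁] [AddCommGroup E₂] [Module F E₂]

-- The value at `X = V ⊓ (W₁ × W₂)` of the expression minimised in `dsRank`, with `ρᵢ (πᵢ X)`
-- replaced by its upper bound `ρᵢ Wᵢ`; both have the same minimum.
noncomputable def prodBound (ρ₁ : Submodule F E₁ → ℕ) (ρ₂ : Submodule F E₂ → ℕ)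
    (V : Submodule F (E₁ × E₂)) (W₁ : Submodule F E₁) (W₂ : Submodule F E₂) : ℕ :=
  ρ₁ W₁ + ρ₂ W₂ + (finrank F V - finrank F (V ⊓ W₁.prod W₂ : Submodule F (E₁ × E₂)))

theorem dsRank_le (ρ₁ : Submodule F E₁ → ℕ) (ρ₂ : Submodule F E₂ → ℕ)
    {V X : Submodule F (E₁ × E₂)} (hXV : X ≤ V) :
    dsRank ρ₁ ρ₂ V ≤ ρ₁ (X.map (LinearMap.fst F E₁ E₂)) + ρ₂ (X.map (LinearMap.snd F E₁ E₂)) +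
      (finrank F V - finrank F X) :=
  Nat.sInf_le ⟨X, hXV, rfl⟩

theorem dsRank_le_prodBound {ρ₁ : Submodule F E₁ → ℕ} {ρ₂ : Submodule F E₂ → ℕ}
    (hρ₁ : Monotone ρ₁) (hρ₂ : Monotone ρ₂) (V : Submodule F (E₁ × E₂))
    (W₁ : Submodule F E₁) (W₂ : Submodule F E₂) :
    dsRank ρ₁ ρ₂ V ≤ prodBound ρ₁ ρ₂ V W₁ W₂ := by
  refine (dsRank_le ρ₁ ρ₂ (inf_le_left : V ⊓ W₁.prod W₂ ≤ V)).trans ?_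
  have h₁ : ρ₁ ((V ⊓ W₁.prod W₂).map (LinearMap.fst F E₁ E₂)) ≤ ρ₁ W₁ :=
    hρ₁ (map_le_iff_le_comap.2 fun _ hx => hx.2.1)
  have h₂ : ρ₂ ((V ⊓ W₁.prod W₂).map (LinearMap.snd F E₁ E₂)) ≤ ρ₂ W₂ :=
    hρ₂ (map_le_iff_le_comap.2 fun _ hx => hx.2.2)
  unfold prodBound
  omega

theorem orthogonal_prod_of_apply_eq_add {B₁ : LinearMap.BilinForm F E₁}
    {B₂ : LinearMap.BilinForm F E₂} {B : LinearMap.BilinForm F (E₁ × E₂)}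
    (hB : ∀ v w : E₁ × E₂, B v w = B₁ v.1 w.1 + B₂ v.2 w.2)
    (W₁ : Submodule F E₁) (W₂ : Submodule F E₂) :
    B.orthogonal (W₁.prod W₂) = (B₁.orthogonal W₁).prod (B₂.orthogonal W₂) := by
  ext x
  refine ⟨fun hx => ⟨fun n hn => ?_, fun n hn => ?_⟩, fun ⟨hx₁, hx₂⟩ n ⟨hn₁, hn₂⟩ => ?_⟩
  · simpa [hB] using hx (n, 0) ⟨hn, zero_mem _⟩
  · simpa [hB] using hx (0, n) ⟨zero_mem _, hn⟩
  · simp only [hB, hx₁ _ hn₁, hx₂ _ hn₂, add_zero]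

variable [FiniteDimensional F E₁] [FiniteDimensional F E₂]

theorem exists_prodBound_le_dsRank (ρ₁ : Submodule F E₁ → ℕ) (ρ₂ : Submodule F E₂ → ℕ)
    (V : Submodule F (E₁ × E₂)) :
    ∃ W₁ W₂, prodBound ρ₁ ρ₂ V W₁ W₂ ≤ dsRank ρ₁ ρ₂ V := by
  obtain ⟨X, hXV, hX⟩ := Nat.sInf_mem (⟨_, V, le_rfl, rfl⟩ :
    {n | ∃ X : Submodule F (E₁ × E₂), X ≤ V ∧ n = ρ₁ (X.map (LinearMap.fst F E₁ E₂)) +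
      ρ₂ (X.map (LinearMap.snd F E₁ E₂)) + (finrank F V - finrank F X)}.Nonempty)
  refine ⟨X.map (LinearMap.fst F E₁ E₂), X.map (LinearMap.snd F E₁ E₂), ?_⟩
  have hXW : X ≤ V ⊓ (X.map (LinearMap.fst F E₁ E₂)).prod (X.map (LinearMap.snd F E₁ E₂)) :=
    le_inf hXV fun x hx => ⟨⟨x, hx, rfl⟩, ⟨x, hx, rfl⟩⟩
  have := Submodule.finrank_mono hXW
  unfold dsRank prodBound
  omega

theorem dsRank_top {ρ₁ : Submodule F E₁ → ℕ} {ρ₂ : Submodule F E₂ → ℕ}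
    (h₁ : IsRkFn F ρ₁) (h₂ : IsRkFn F ρ₂) :
    dsRank ρ₁ ρ₂ ⊤ = ρ₁ ⊤ + ρ₂ ⊤ := by
  refine le_antisymm ((dsRank_le_prodBound h₁.2.1 h₂.2.1 ⊤ ⊤ ⊤).trans_eq ?_) ?_
  · rw [prodBound, top_inf_eq, Submodule.finrank_prod]
    simp only [finrank_top, Module.finrank_prod, Nat.sub_self, add_zero]
  obtain ⟨W₁, W₂, hW⟩ := exists_prodBound_le_dsRank ρ₁ ρ₂ ⊤
  have hW₁ := h₁.rank_add_finrank_le (le_top : W₁ ≤ ⊤)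
  have hW₂ := h₂.rank_add_finrank_le (le_top : W₂ ≤ ⊤)
  rw [prodBound, top_inf_eq, Submodule.finrank_prod] at hW
  simp only [finrank_top, Module.finrank_prod] at hW hW₁ hW₂
  omega

theorem nondegenerate_of_apply_eq_add {B₁ : LinearMap.BilinForm F E₁}
    {B₂ : LinearMap.BilinForm F E₂} {B : LinearMap.BilinForm F (E₁ × E₂)}
    (hB : ∀ v w : E₁ × E₂, B v w = B₁ v.1 w.1 + B₂ v.2 w.2)
    (hB₁ : B₁.Nondegenerate) (hB₂ : B₂.Nondegenerate) : B.Nondegenerate :=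
  .ofSeparatingLeft fun v hv => Prod.ext
    (hB₁.1 _ fun w => by simpa [hB] using hv (w, 0))
    (hB₂.1 _ fun w => by simpa [hB] using hv (0, w))

theorem prodBound_dualRk_add_rank_top {ρ₁ : Submodule F E₁ → ℕ} {ρ₂ : Submodule F E₂ → ℕ}
    (h₁ : IsRkFn F ρ₁) (h₂ : IsRkFn F ρ₂) {B₁ : LinearMap.BilinForm F E₁}
    {B₂ : LinearMap.BilinForm F E₂} {B : LinearMap.BilinForm F (E₁ × E₂)}
    (hB₁ : B₁.Nondegenerate) (hB₂ : B₂.Nondegenerate)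
    (hB : ∀ v w : E₁ × E₂, B v w = B₁ v.1 w.1 + B₂ v.2 w.2)
    (V : Submodule F (E₁ × E₂)) (W₁ : Submodule F E₁) (W₂ : Submodule F E₂) :
    prodBound (dualRk ρ₁ B₁) (dualRk ρ₂ B₂) V W₁ W₂ + (ρ₁ ⊤ + ρ₂ ⊤) =
      prodBound ρ₁ ρ₂ (B.orthogonal V) (B₁.orthogonal W₁) (B₂.orthogonal W₂) + finrank F V := by
  have hdim := LinearMap.BilinForm.finrank_add_finrank_orthogonal_inf
    (nondegenerate_of_apply_eq_add hB hB₁ hB₂) V (W₁.prod W₂)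
  rw [orthogonal_prod_of_apply_eq_add hB, Submodule.finrank_prod] at hdim
  have := h₁.dualRk_add_rank_top hB₁ W₁
  have := h₂.dualRk_add_rank_top hB₂ W₂
  have := Submodule.finrank_mono (inf_le_left : V ⊓ W₁.prod W₂ ≤ V)
  have := Submodule.finrank_mono
    (inf_le_left : B.orthogonal V ⊓ (B₁.orthogonal W₁).prod (B₂.orthogonal W₂) ≤ B.orthogonal V)
  unfold prodBound
  omega

end DirectSum

end QM

end

namespace QM

variable {F E₁ E₂ : Type*} [Field F] [Fintype F]
  [AddCommGroup E₁] [Module F E₁] [FiniteDimensional F E₁]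
  [AddCommGroup E₂] [Module F E₂] [FiniteDimensional F E₂]

theorem stmt16_general (ρ₁ : Submodule F E₁ → ℕ) (ρ₂ : Submodule F E₂ → ℕ)
    (h₁ : IsRkFn F ρ₁) (h₂ : IsRkFn F ρ₂)
    (B₁ : LinearMap.BilinForm F E₁) (hB₁ : B₁.Nondegenerate)
    (B₂ : LinearMap.BilinForm F E₂) (hB₂ : B₂.Nondegenerate)
    (B : LinearMap.BilinForm F (E₁ × E₂))
    (hB : ∀ v w : E₁ × E₂, B v w = B₁ v.1 w.1 + B₂ v.2 w.2) :
    ∀ V : Submodule F (E₁ × E₂),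
      dualRk (dsRank ρ₁ ρ₂) B V = dsRank (dualRk ρ₁ B₁) (dualRk ρ₂ B₂) V := by
  intro V
  have key := prodBound_dualRk_add_rank_top h₁ h₂ hB₁ hB₂ hB V
  have hdual_le : dsRank (dualRk ρ₁ B₁) (dualRk ρ₂ B₂) V + (ρ₁ ⊤ + ρ₂ ⊤) ≤
      dsRank ρ₁ ρ₂ (B.orthogonal V) + finrank F V := by
    obtain ⟨U₁, U₂, hU⟩ := exists_prodBound_le_dsRank ρ₁ ρ₂ (B.orthogonal V)
    obtain ⟨W₁, rfl⟩ := LinearMap.BilinForm.exists_orthogonal_eq hB₁ U₁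
    obtain ⟨W₂, rfl⟩ := LinearMap.BilinForm.exists_orthogonal_eq hB₂ U₂
    have := dsRank_le_prodBound (h₁.monotone_dualRk hB₁) (h₂.monotone_dualRk hB₂) V W₁ W₂
    have := key W₁ W₂
    omega
  have hle_dual : dsRank ρ₁ ρ₂ (B.orthogonal V) + finrank F V ≤
      dsRank (dualRk ρ₁ B₁) (dualRk ρ₂ B₂) V + (ρ₁ ⊤ + ρ₂ ⊤) := by
    obtain ⟨W₁, W₂, hW⟩ := exists_prodBound_le_dsRank (dualRk ρ₁ B₁) (dualRk ρ₂ B₂) V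
    have := dsRank_le_prodBound h₁.2.1 h₂.2.1 (B.orthogonal V) (B₁.orthogonal W₁)
      (B₂.orthogonal W₂)
    have := key W₁ W₂
    omega
  rw [dualRk, dsRank_top h₁ h₂]
  omega

theorem stmt16 (ρ₁ : Submodule F E₁ → ℕ) (ρ₂ : Submodule F E₂ → ℕ)
    (h₁ : IsRkFn F ρ₁) (h₂ : IsRkFn F ρ₂)
    (B₁ : LinearMap.BilinForm F E₁) (hB₁ : B₁.Nondegenerate) (hB₁s : B₁.IsSymm)
    (B₂ : LinearMap.BilinForm F E₂) (hB₂ : B₂.Nondegenerate) (hB₂s : B₂.IsSymm)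
    (B : LinearMap.BilinForm F (E₁ × E₂))
    (hB : ∀ v w : E₁ × E₂, B v w = B₁ v.1 w.1 + B₂ v.2 w.2) :
    ∀ V : Submodule F (E₁ × E₂),
      dualRk (dsRank ρ₁ ρ₂) B V = dsRank (dualRk ρ₁ B₁) (dualRk ρ₂ B₂) V :=
  stmt16_general ρ₁ ρ₂ h₁ h₂ B₁ hB₁ B₂ hB₂ B hB

end QM
end
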